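/- If u : Ω → ℝ is measurable with u ≥ 0 almost everywhere, δ > 1, and the set {x ∈ Ω : 0 < u(x) < s_*} has positive measure, then ∫_Ω F_*(u(x)) dμ < ∫_Ω F_*(δ·u(x)) dμ. -/
import Mathlib


open MeasureTheory

/-- The truncation `f_*` of `f` at level `s_*`. -/
noncomputable def fstar (f : ℝ → ℝ) (sstar : ℝ) (t : ℝ) : ℝ :=
  if t < 0 then f 0 else if t < sstar then f t else 0

/-- `F_*(t) = ∫_0^t f_*(s) ds`. -/
noncomputable def Fstar (f : ℝ → ℝ) (sstar : ℝ) (t : ℝ) : ℝ :=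
  ∫ s in (0:ℝ)..t, fstar f sstar s

lemma fstar_eq (f : ℝ → ℝ) (sstar : ℝ) (hs : 0 < sstar) (hfs : f sstar = 0) :
    fstar f sstar = fun t => f (min (max t 0) sstar) := by
  funext t
  unfold fstar
  rcases lt_or_ge t 0 with h | h
  · rw [if_pos h, max_eq_right h.le, min_eq_left hs.le]
  · rw [if_neg (not_lt.2 h), max_eq_left h]
    rcases lt_or_ge t sstar with h2 | h2
    · rw [if_pos h2, min_eq_left h2.le]
    · rw [if_neg (not_lt.2 h2), min_eq_right h2, hfs]

lemma fstar_cont (f : ℝ → ℝ) (sstar : ℝ) (hf : Continuous f) (hs : 0 < sstar)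
    (hfs : f sstar = 0) : Continuous (fstar f sstar) := by
  rw [fstar_eq f sstar hs hfs]
  exact hf.comp ((continuous_id.max continuous_const).min continuous_const)

lemma f0_nonneg (f : ℝ → ℝ) (sstar : ℝ) (hf : Continuous f) (hs : 0 < sstar)
    (hfpos : ∀ t ∈ Set.Ioo (0 : ℝ) sstar, 0 < f t) : 0 ≤ f 0 := by
  have hlim : Filter.Tendsto f (nhdsWithin 0 (Set.Ioi 0)) (nhds (f 0)) :=
    (hf.tendsto 0).mono_left nhdsWithin_le_nhds
  refine ge_of_tendsto hlim ?_
  filter_upwards [Ioo_mem_nhdsGT_of_mem (Set.mem_Ico.2 ⟨le_refl 0, hs⟩)] with t ht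
  exact (hfpos t ht).le

lemma fstar_nonneg (f : ℝ → ℝ) (sstar : ℝ) (hf : Continuous f) (hs : 0 < sstar)
    (hfpos : ∀ t ∈ Set.Ioo (0 : ℝ) sstar, 0 < f t) :
    ∀ t, 0 ≤ fstar f sstar t := by
  intro t
  unfold fstar
  rcases lt_or_ge t 0 with h | h
  · rw [if_pos h]; exact f0_nonneg f sstar hf hs hfpos
  · rw [if_neg (not_lt.2 h)]
    rcases lt_or_ge t sstar with h2 | h2
    · rw [if_pos h2]
      rcases eq_or_lt_of_le h with h0 | h0
      · rw [← h0]; exact f0_nonneg f sstar hf hs hfpos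
      · exact (hfpos t ⟨h0, h2⟩).le
    · rw [if_neg (not_lt.2 h2)]

theorem integral_Fstar_strict_mono_scaling {Ω : Type*} [MeasurableSpace Ω]
    (μ : Measure Ω) [IsFiniteMeasure μ]
    (f : ℝ → ℝ) (sstar : ℝ)
    (hf : Continuous f) (hs : 0 < sstar)
    (hfpos : ∀ t ∈ Set.Ioo (0 : ℝ) sstar, 0 < f t)
    (hfs : f sstar = 0)
    (u : Ω → ℝ) (hu : Measurable u) (hu0 : ∀ᵐ x ∂μ, 0 ≤ u x)
    (δ : ℝ) (hδ : 1 < δ)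
    (hset : 0 < μ {x | 0 < u x ∧ u x < sstar}) :
    ∫ x, Fstar f sstar (u x) ∂μ < ∫ x, Fstar f sstar (δ * u x) ∂μ := by
  have hcont := fstar_cont f sstar hf hs hfs
  have hnn := fstar_nonneg f sstar hf hs hfpos
  have hint : ∀ a b : ℝ, IntervalIntegrable (fstar f sstar) volume a b :=
    fun a b => hcont.intervalIntegrable a b
  -- additivity of the primitive
  have hFadd : ∀ a b : ℝ, Fstar f sstar b =
      Fstar f sstar a + ∫ s in a..b, fstar f sstar s := by
    intro a b
    have := intervalIntegral.integral_add_adjacent_intervals (hint 0 a) (hint a b)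
    unfold Fstar
    linarith [this]
  -- monotonicity
  have hmono : ∀ a b : ℝ, a ≤ b → Fstar f sstar a ≤ Fstar f sstar b := by
    intro a b hab
    rw [hFadd a b]
    have : 0 ≤ ∫ s in a..b, fstar f sstar s :=
      intervalIntegral.integral_nonneg hab (fun s _ => hnn s)
    linarith
  -- Fstar is bounded above by Fstar sstar
  have hbdd : ∀ t : ℝ, Fstar f sstar t ≤ Fstar f sstar sstar := by
    intro t
    rcases le_or_gt t sstar with h | h
    · exact hmono t sstar h
    · rw [hFadd sstar t]
      have hz : ∫ s in sstar..t, fstar f sstar s = 0 := by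
        rw [intervalIntegral.integral_congr (g := fun _ => (0:ℝ))
          (fun s hsm => ?_), intervalIntegral.integral_zero]
        rw [Set.uIcc_of_le h.le] at hsm
        unfold fstar
        rw [if_neg (not_lt.2 (hs.le.trans hsm.1)), if_neg (not_lt.2 hsm.1)]
      rw [hz]; linarith
  have hF0 : Fstar f sstar 0 = 0 := intervalIntegral.integral_same
  have hFnn : ∀ t : ℝ, 0 ≤ t → 0 ≤ Fstar f sstar t := by
    intro t ht; rw [← hF0]; exact hmono 0 t ht
  have hFcont : Continuous (Fstar f sstar) :=
    intervalIntegral.continuous_primitive hint 0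
  -- the two integrands
  set g1 : Ω → ℝ := fun x => Fstar f sstar (u x) with hg1
  set g2 : Ω → ℝ := fun x => Fstar f sstar (δ * u x) with hg2
  have hm1 : AEStronglyMeasurable g1 μ :=
    (hFcont.measurable.comp hu).aestronglyMeasurable
  have hm2 : AEStronglyMeasurable g2 μ :=
    (hFcont.measurable.comp ((measurable_const.mul hu))).aestronglyMeasurable
  have hCnn : 0 ≤ Fstar f sstar sstar := hFnn sstar hs.le
  have hi1 : Integrable g1 μ := by
    refine (integrable_const (Fstar f sstar sstar)).mono' hm1 ?_
    filter_upwards [hu0] with x hx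
    rw [Real.norm_eq_abs, abs_le]
    exact ⟨by linarith [hFnn (u x) hx], hbdd (u x)⟩
  have hi2 : Integrable g2 μ := by
    refine (integrable_const (Fstar f sstar sstar)).mono' hm2 ?_
    filter_upwards [hu0] with x hx
    have hx2 : 0 ≤ δ * u x := mul_nonneg (by linarith) hx
    rw [Real.norm_eq_abs, abs_le]
    exact ⟨by linarith [hFnn (δ * u x) hx2], hbdd (δ * u x)⟩
  -- pointwise a.e. nonneg difference
  have hle : ∀ᵐ x ∂μ, 0 ≤ g2 x - g1 x := by
    filter_upwards [hu0] with x hx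
    have : u x ≤ δ * u x := le_mul_of_one_le_left hx hδ.le
    have := hmono (u x) (δ * u x) this
    simp only [hg1, hg2]; linarith
  -- strict gain on the good set
  have hstrict : ∀ x, 0 < u x → u x < sstar → g1 x < g2 x := by
    intro x hx0 hxs
    set a := u x
    set b := δ * u x with hb
    have hab : a < b := by
      rw [hb]; nlinarith
    set c := min b sstar with hc
    have hac : a < c := lt_min hab hxs
    have hcb : c ≤ b := min_le_left _ _
    have h1 : Fstar f sstar a < Fstar f sstar c := by
      rw [hFadd a c]
      have hpos : 0 < ∫ s in a..c, fstar f sstar s := by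
        refine intervalIntegral.intervalIntegral_pos_of_pos_on (hint a c) ?_ hac
        intro s hsm
        have hs0 : 0 < s := hx0.trans hsm.1
        have hss : s < sstar := hsm.2.trans_le (min_le_right _ _)
        have : fstar f sstar s = f s := by
          unfold fstar; rw [if_neg (not_lt.2 hs0.le), if_pos hss]
        rw [this]
        exact hfpos s ⟨hs0, hss⟩
      linarith
    have h2 : Fstar f sstar c ≤ Fstar f sstar b := hmono c b hcb
    simp only [hg1, hg2]
    exact h1.trans_le h2
  -- conclude via positivity of the integral of the difference
  have hdiff : 0 < ∫ x, (g2 x - g1 x) ∂μ := by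
    rw [integral_pos_iff_support_of_nonneg_ae hle (hi2.sub hi1)]
    refine hset.trans_le (measure_mono ?_)
    intro x hx
    have := hstrict x hx.1 hx.2
    simp only [Function.mem_support]
    intro h; rw [sub_eq_zero] at h; exact this.ne' h
  have := integral_sub hi2 hi1
  rw [this] at hdiff
  linarith
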